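/- Let k ≥ 2 be an integer, n ≥ 3, and let x₀, x₁, ..., x_{n-1} be i.i.d. random variables uniformly distributed on {1, 2, ..., k}. Define the perimeter P_n := 2n + x₀ + x_{n-1} + Σ_{i=1}^{n-1} |x_i - x_{i-1}|. Then Var(P_n) = ((4k⁴ - 5k² + 1) + 3(k⁴ - 1)·n) / (45k²). -/

import Mathlib

open MeasureTheory ProbabilityTheory
open scoped ENNReal

/-- The uniform probability measure on the integers `{1, ..., k}` (as a measure on `ℕ`). -/
noncomputable def unifMeasure (k : ℕ) : Measure ℕ :=
  (k : ℝ≥0∞)⁻¹ • ∑ i ∈ Finset.Icc 1 k, Measure.dirac i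

/-!
Write `P_n = 2n + ∑_{j=0}^{n} T_j` with `T_0 = x_0`, `T_n = x_{n-1}` and `T_j = |x_j - x_{j-1}|`
otherwise. `T_i` and `T_j` are functions of disjoint sets of columns once `j ≥ i + 2`, so
`Var P_n = ∑ Var T_j + 2 ∑ Cov(T_j, T_{j+1})`. Only four moments of at most three independent
uniform variables `X, Y, W` occur: `Var X = (k²-1)/12`, `Var |X-Y| = (k²-1)(k²+2)/(18k²)`,
`Cov(|X-Y|, X) = 0` and `Cov(|X-Y|, |Y-W|) = (k²-1)(k²-4)/(180k²)`. Each is a finite sum over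
`{1, …, k}^m`, evaluated by telescoping against an explicit polynomial in the upper bound.
-/

open Finset

lemma sum_Ioc_eq_sub {f q : ℕ → ℝ} (hq : ∀ m, q (m + 1) - q m = f (m + 1)) {a b : ℕ}
    (hab : a ≤ b) : ∑ i ∈ Ioc a b, f i = q b - q a := by
  induction b, hab using Nat.le_induction with
  | base => simp
  | succ b hab ih => rw [sum_Ioc_succ_top hab, ih, ← hq]; ring

lemma sum_Icc_one_eq {f q : ℕ → ℝ} (h0 : q 0 = 0) (hq : ∀ m, q (m + 1) - q m = f (m + 1))
    (k : ℕ) : ∑ i ∈ Icc 1 k, f i = q k := by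
  rw [show Icc 1 k = Ioc 0 k from Icc_add_one_left_eq_Ioc 0 k, sum_Ioc_eq_sub hq k.zero_le, h0,
    sub_zero]

lemma sum_Icc_natCast (k : ℕ) : ∑ v ∈ Icc 1 k, (v : ℝ) = k * (k + 1) / 2 :=
  sum_Icc_one_eq (q := fun m ↦ m * (m + 1) / 2) (by simp) (fun m ↦ by push_cast; ring) k

lemma sum_Icc_natCast_sq (k : ℕ) : ∑ v ∈ Icc 1 k, (v : ℝ) ^ 2 = k * (k + 1) * (2 * k + 1) / 6 :=
  sum_Icc_one_eq (q := fun m ↦ m * (m + 1) * (2 * m + 1) / 6) (by simp)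
    (fun m ↦ by push_cast; ring) k

lemma sum_Icc_abs_sub {k v : ℕ} (hv : v ≤ k) :
    ∑ w ∈ Icc 1 k, |(v : ℝ) - w| = v ^ 2 - (k + 1) * v + k * (k + 1) / 2 := by
  rw [show Icc 1 k = Ioc 0 k from Icc_add_one_left_eq_Ioc 0 k,
    ← sum_Ioc_consecutive _ v.zero_le hv]
  have below : ∑ w ∈ Ioc 0 v, |(v : ℝ) - w| = ∑ w ∈ Ioc 0 v, ((v : ℝ) - w) :=
    sum_congr rfl fun w hw ↦ abs_of_nonneg (sub_nonneg.2 (by exact_mod_cast (mem_Ioc.1 hw).2))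
  have above : ∑ w ∈ Ioc v k, |(v : ℝ) - w| = ∑ w ∈ Ioc v k, ((w : ℝ) - v) :=
    sum_congr rfl fun w hw ↦ by
      rw [abs_sub_comm]
      exact abs_of_nonneg (sub_nonneg.2 (by exact_mod_cast (mem_Ioc.1 hw).1.le))
  rw [below, above, sum_Ioc_eq_sub (q := fun m ↦ v * m - m * (m + 1) / 2)
    (fun m ↦ by push_cast; ring) v.zero_le, sum_Ioc_eq_sub (q := fun m ↦ m * (m + 1) / 2 - v * m)
    (fun m ↦ by push_cast; ring) hv]
  push_cast; ring

lemma sum_Icc_sum_Icc_abs_sub (k : ℕ) :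
    ∑ u ∈ Icc 1 k, ∑ v ∈ Icc 1 k, |(u : ℝ) - v| = ((k : ℝ) ^ 3 - k) / 3 := by
  rw [sum_congr rfl fun u hu ↦ sum_Icc_abs_sub (mem_Icc.1 hu).2]
  exact sum_Icc_one_eq (q := fun m ↦ m * (m + 1) * (2 * m + 1) / 6 - (k + 1) * (m * (m + 1) / 2)
    + m * (k * (k + 1) / 2)) (by simp) (fun m ↦ by push_cast; ring) k |>.trans (by ring)

lemma sum_Icc_sum_Icc_sq_sub (k : ℕ) :
    ∑ u ∈ Icc 1 k, ∑ v ∈ Icc 1 k, ((u : ℝ) - v) ^ 2 = (k : ℝ) ^ 2 * ((k : ℝ) ^ 2 - 1) / 6 := by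
  have inner (u : ℕ) : ∑ v ∈ Icc 1 k, ((u : ℝ) - v) ^ 2
      = k * u ^ 2 - k * (k + 1) * u + k * (k + 1) * (2 * k + 1) / 6 :=
    sum_Icc_one_eq (q := fun m ↦ m * u ^ 2 - m * (m + 1) * u + m * (m + 1) * (2 * m + 1) / 6)
      (by simp) (fun m ↦ by push_cast; ring) k
  simp_rw [inner]
  exact sum_Icc_one_eq (q := fun m ↦ k * (m * (m + 1) * (2 * m + 1) / 6)
    - k * (k + 1) * (m * (m + 1) / 2) + m * (k * (k + 1) * (2 * k + 1) / 6)) (by simp)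
    (fun m ↦ by push_cast; ring) k |>.trans (by ring)

lemma sum_Icc_sum_Icc_mul_abs_sub (k : ℕ) :
    ∑ u ∈ Icc 1 k, ∑ v ∈ Icc 1 k, (u : ℝ) * |(u : ℝ) - v|
      = k * (k + 1) * ((k : ℝ) ^ 2 - 1) / 6 := by
  rw [sum_congr rfl fun u hu ↦ by rw [← mul_sum, sum_Icc_abs_sub (mem_Icc.1 hu).2]]
  exact sum_Icc_one_eq (q := fun m ↦ (m * (m + 1) / 2) ^ 2
    - (k + 1) * (m * (m + 1) * (2 * m + 1) / 6) + k * (k + 1) / 2 * (m * (m + 1) / 2))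
    (by simp) (fun m ↦ by push_cast; ring) k |>.trans (by ring)

lemma sum_Icc_sum_Icc_sum_Icc_abs_sub_mul_abs_sub (k : ℕ) :
    ∑ u ∈ Icc 1 k, ∑ v ∈ Icc 1 k, ∑ w ∈ Icc 1 k, |(u : ℝ) - v| * |(v : ℝ) - w|
      = (7 * (k : ℝ) ^ 5 - 15 * (k : ℝ) ^ 3 + 8 * k) / 60 := by
  have hsq (v : ℕ) (hv : v ∈ Icc 1 k) : ∑ u ∈ Icc 1 k, ∑ w ∈ Icc 1 k, |(u : ℝ) - v| * |(v : ℝ) - w|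
      = ((v : ℝ) ^ 2 - (k + 1) * v + k * (k + 1) / 2) ^ 2 := by
    simp_rw [abs_sub_comm _ (v : ℝ), ← mul_sum, ← sum_mul, sum_Icc_abs_sub (mem_Icc.1 hv).2, sq]
  rw [sum_comm, sum_congr rfl hsq]
  exact sum_Icc_one_eq (q := fun m ↦ m * (m + 1) * (2 * m + 1) * (3 * m ^ 2 + 3 * m - 1) / 30
    - 2 * (k + 1) * (m * (m + 1) / 2) ^ 2
    + ((k + 1) ^ 2 + k * (k + 1)) * (m * (m + 1) * (2 * m + 1) / 6)
    - (k + 1) * (k * (k + 1)) * (m * (m + 1) / 2) + (k * (k + 1) / 2) ^ 2 * m)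
    (by simp) (fun m ↦ by push_cast; ring) k |>.trans (by ring)

section Uniform

variable {Ω α β : Type*} [MeasurableSpace Ω] {μ : Measure Ω}
  [MeasurableSpace α] [MeasurableSpace β]

lemma memLp_comp_of_ae_mem [MeasurableSingletonClass α] [Countable α] [IsFiniteMeasure μ]
    {Z : Ω → α} (hZ : Measurable Z) {s : Finset α} (hs : ∀ᵐ ω ∂μ, Z ω ∈ s) (F : α → ℝ)
    (p : ℝ≥0∞) : MemLp (fun ω ↦ F (Z ω)) p μ := by
  refine MemLp.of_bound (Measurable.of_discrete.comp hZ).aestronglyMeasurable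
    (∑ a ∈ s, ‖F a‖) ?_
  filter_upwards [hs] with ω hω
  exact single_le_sum (f := fun a ↦ ‖F a‖) (fun _ _ ↦ norm_nonneg _) hω

structure IsUniformOn (Z : Ω → α) (s : Finset α) (μ : Measure Ω) : Prop where
  measurable : Measurable Z
  ae_mem : ∀ᵐ ω ∂μ, Z ω ∈ s
  measureReal_preimage_singleton : ∀ a ∈ s, μ.real (Z ⁻¹' {a}) = (#s : ℝ)⁻¹

namespace IsUniformOn

variable {Z : Ω → α} {s : Finset α}

lemma memLp_comp [MeasurableSingletonClass α] [Countable α] [IsFiniteMeasure μ]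
    (h : IsUniformOn Z s μ) (F : α → ℝ) (p : ℝ≥0∞) : MemLp (fun ω ↦ F (Z ω)) p μ :=
  memLp_comp_of_ae_mem h.measurable h.ae_mem F p

lemma integral_comp [MeasurableSingletonClass α] [Countable α] [IsFiniteMeasure μ]
    (h : IsUniformOn Z s μ) (F : α → ℝ) : ∫ ω, F (Z ω) ∂μ = (∑ a ∈ s, F a) / #s := by
  have hmap : (μ.map Z).restrict s = μ.map Z :=
    Measure.restrict_eq_self_of_ae_mem ((ae_map_iff h.measurable.aemeasurable
      (Finset.measurableSet _)).2 h.ae_mem)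
  have hint : IntegrableOn F s (μ.map Z) :=
    (integrableOn_finset_iUnion (t := fun a ↦ {a}).2 fun a _ ↦
      integrableOn_singleton).mono_set (Set.biUnion_of_singleton _).ge
  rw [← integral_map h.measurable.aemeasurable Measurable.of_discrete.aestronglyMeasurable,
    ← hmap, setIntegral_finset s hint, sum_div]
  refine sum_congr rfl fun a ha ↦ ?_
  rw [map_measureReal_apply h.measurable (measurableSet_singleton a),
    h.measureReal_preimage_singleton a ha, smul_eq_mul, inv_mul_eq_div]

lemma nonempty [NeZero μ] (h : IsUniformOn Z s μ) : s.Nonempty := by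
  by_contra hs
  have := h.ae_mem
  simp only [not_nonempty_iff_eq_empty.1 hs, notMem_empty, Filter.eventually_false_iff_eq_bot,
    ae_eq_bot] at this
  exact NeZero.ne μ this

lemma prodMk [MeasurableSingletonClass α] [MeasurableSingletonClass β] {W : Ω → β}
    {t : Finset β} (hZ : IsUniformOn Z s μ) (hW : IsUniformOn W t μ) (hZW : IndepFun Z W μ) :
    IsUniformOn (fun ω ↦ (Z ω, W ω)) (s ×ˢ t) μ where
  measurable := hZ.measurable.prodMk hW.measurable
  ae_mem := by
    filter_upwards [hZ.ae_mem, hW.ae_mem] with ω h₁ h₂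
    exact mem_product.2 ⟨h₁, h₂⟩
  measureReal_preimage_singleton := by
    rintro ⟨a, b⟩ hab
    rw [mem_product] at hab
    rw [← Set.singleton_prod_singleton, Set.mk_preimage_prod,
      measureReal_def, hZW.measure_inter_preimage_eq_mul _ _ (measurableSet_singleton a)
        (measurableSet_singleton b), ENNReal.toReal_mul, ← measureReal_def, ← measureReal_def,
      hZ.measureReal_preimage_singleton a hab.1, hW.measureReal_preimage_singleton b hab.2,
      card_product, Nat.cast_mul, mul_inv]

end IsUniformOn

end Uniform

lemma isUniformOn_of_map_eq_unifMeasure {Ω : Type*} [MeasurableSpace Ω] {μ : Measure Ω}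
    {k : ℕ} {X : Ω → ℕ} (hX : Measurable X) (h : μ.map X = unifMeasure k) :
    IsUniformOn X (Icc 1 k) μ where
  measurable := hX
  ae_mem := by
    have : ∀ᵐ v ∂μ.map X, v ∈ (Icc 1 k : Set ℕ) := by
      rw [h, ae_iff]
      simp [unifMeasure]
    exact (ae_map_iff hX.aemeasurable (Icc 1 k).measurableSet).1 this
  measureReal_preimage_singleton v hv := by
    rw [← map_measureReal_apply hX (measurableSet_singleton v), h]
    simp [unifMeasure, measureReal_def, hv]

section Moments

variable {Ω : Type*} [MeasurableSpace Ω] {μ : Measure Ω} [IsProbabilityMeasure μ] {k : ℕ}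
  {X Y W : Ω → ℕ}

lemma IsUniformOn.variance_natCast (h : IsUniformOn X (Icc 1 k) μ) :
    Var[fun ω ↦ (X ω : ℝ); μ] = ((k : ℝ) ^ 2 - 1) / 12 := by
  have hk : (k : ℝ) ≠ 0 := by simpa [Nat.one_le_iff_ne_zero] using h.nonempty
  rw [variance_eq_sub (h.memLp_comp _ 2)]
  simp only [Pi.pow_apply]
  rw [h.integral_comp (fun v ↦ (v : ℝ) ^ 2), h.integral_comp (fun v ↦ (v : ℝ)),
    sum_Icc_natCast, sum_Icc_natCast_sq, Nat.card_Icc, Nat.add_sub_cancel]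
  field_simp
  ring

lemma IsUniformOn.integral_abs_sub
    (h : IsUniformOn (fun ω ↦ (X ω, Y ω)) (Icc 1 k ×ˢ Icc 1 k) μ) :
    ∫ ω, |(X ω : ℝ) - Y ω| ∂μ = ((k : ℝ) ^ 2 - 1) / (3 * k) := by
  have hk : (k : ℝ) ≠ 0 := by simpa [Nat.one_le_iff_ne_zero] using h.nonempty
  rw [h.integral_comp (fun p ↦ |(p.1 : ℝ) - p.2|), sum_product, sum_Icc_sum_Icc_abs_sub,
    card_product, Nat.card_Icc, Nat.add_sub_cancel]
  push_cast
  field_simp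

lemma IsUniformOn.variance_abs_sub
    (h : IsUniformOn (fun ω ↦ (X ω, Y ω)) (Icc 1 k ×ˢ Icc 1 k) μ) :
    Var[fun ω ↦ |(X ω : ℝ) - Y ω|; μ] = ((k : ℝ) ^ 2 - 1) * (k ^ 2 + 2) / (18 * k ^ 2) := by
  have hk : (k : ℝ) ≠ 0 := by simpa [Nat.one_le_iff_ne_zero] using h.nonempty
  rw [variance_eq_sub (h.memLp_comp (fun p ↦ |(p.1 : ℝ) - p.2|) 2), h.integral_abs_sub]
  simp only [Pi.pow_apply, sq_abs]
  rw [h.integral_comp (fun p ↦ ((p.1 : ℝ) - p.2) ^ 2), sum_product, sum_Icc_sum_Icc_sq_sub,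
    card_product, Nat.card_Icc, Nat.add_sub_cancel]
  push_cast
  field_simp
  ring

lemma IsUniformOn.covariance_abs_sub_eq_zero
    (h : IsUniformOn (fun ω ↦ (X ω, Y ω)) (Icc 1 k ×ˢ Icc 1 k) μ) :
    cov[fun ω ↦ |(X ω : ℝ) - Y ω|, fun ω ↦ (X ω : ℝ); μ] = 0 := by
  have hk : (k : ℝ) ≠ 0 := by simpa [Nat.one_le_iff_ne_zero] using h.nonempty
  rw [covariance_comm, covariance_eq_sub (h.memLp_comp (fun p ↦ (p.1 : ℝ)) 2)
    (h.memLp_comp (fun p ↦ |(p.1 : ℝ) - p.2|) 2), h.integral_abs_sub]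
  simp only [Pi.mul_apply]
  rw [h.integral_comp (fun p ↦ (p.1 : ℝ) * |(p.1 : ℝ) - p.2|), h.integral_comp (fun p ↦ (p.1 : ℝ)),
    sum_product, sum_product, sum_Icc_sum_Icc_mul_abs_sub]
  simp only [sum_const, nsmul_eq_mul, ← mul_sum, sum_Icc_natCast, card_product, Nat.card_Icc,
    Nat.add_sub_cancel]
  push_cast
  field_simp
  ring

lemma IsUniformOn.covariance_abs_sub_abs_sub
    (hXY : IsUniformOn (fun ω ↦ (X ω, Y ω)) (Icc 1 k ×ˢ Icc 1 k) μ)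
    (hYW : IsUniformOn (fun ω ↦ (Y ω, W ω)) (Icc 1 k ×ˢ Icc 1 k) μ)
    (h : IsUniformOn (fun ω ↦ ((X ω, Y ω), W ω)) ((Icc 1 k ×ˢ Icc 1 k) ×ˢ Icc 1 k) μ) :
    cov[fun ω ↦ |(X ω : ℝ) - Y ω|, fun ω ↦ |(Y ω : ℝ) - W ω|; μ]
      = ((k : ℝ) ^ 2 - 1) * (k ^ 2 - 4) / (180 * k ^ 2) := by
  have hk : (k : ℝ) ≠ 0 := by simpa [Nat.one_le_iff_ne_zero] using h.nonempty
  rw [covariance_eq_sub (hXY.memLp_comp (fun p ↦ |(p.1 : ℝ) - p.2|) 2)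
    (hYW.memLp_comp (fun p ↦ |(p.1 : ℝ) - p.2|) 2), hXY.integral_abs_sub, hYW.integral_abs_sub]
  simp only [Pi.mul_apply]
  rw [h.integral_comp (fun p ↦ |(p.1.1 : ℝ) - p.1.2| * |(p.1.2 : ℝ) - p.2|), sum_product,
    sum_product, sum_Icc_sum_Icc_sum_Icc_abs_sub_mul_abs_sub, card_product, card_product,
    Nat.card_Icc, Nat.add_sub_cancel]
  push_cast
  field_simp
  ring

end Moments

lemma variance_sum_range_succ_of_covariance_eq_zero {Ω : Type*} [MeasurableSpace Ω]
    {μ : Measure Ω} [IsFiniteMeasure μ] {X : ℕ → Ω → ℝ} {m : ℕ}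
    (hX : ∀ i ≤ m, MemLp (X i) 2 μ) (hcov : ∀ i j, i + 2 ≤ j → j ≤ m → cov[X i, X j; μ] = 0) :
    Var[fun ω ↦ ∑ i ∈ range (m + 1), X i ω; μ]
      = ∑ i ∈ range (m + 1), Var[X i; μ] + 2 * ∑ i ∈ range m, cov[X i, X (i + 1); μ] := by
  induction m with
  | zero => simp
  | succ m ih =>
    have hX' (i : ℕ) (hi : i ∈ range (m + 1)) : MemLp (X i) 2 μ := hX i (by grind)
    have hlast :
        cov[fun ω ↦ ∑ i ∈ range (m + 1), X i ω, X (m + 1); μ] = cov[X m, X (m + 1); μ] := by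
      rw [covariance_fun_sum_left' hX' (hX _ le_rfl), sum_range_succ,
        sum_eq_zero fun i hi ↦ hcov i (m + 1) (by grind) le_rfl, zero_add]
    simp only [sum_range_succ _ (m + 1)]
    rw [variance_fun_add (memLp_finsetSum _ hX') (hX _ le_rfl), hlast,
      ih (fun i hi ↦ hX i (by omega)) (fun i j hij hj ↦ hcov i j hij (by omega))]
    simp only [sum_range_succ]
    ring

lemma sum_range_eq_of_ends {f : ℕ → ℝ} {m : ℕ} {a b : ℝ} (hm : 2 ≤ m) (h₀ : f 0 = a)
    (h₁ : f (m - 1) = a) (hb : ∀ i, 0 < i → i < m - 1 → f i = b) :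
    ∑ i ∈ range m, f i = 2 * a + ((m : ℝ) - 2) * b := by
  obtain ⟨p, rfl⟩ : ∃ p, m = p + 2 := ⟨m - 2, by omega⟩
  rw [sum_range_succ, sum_range_succ', h₀, show f (p + 1) = a from h₁,
    sum_congr rfl fun i hi ↦ hb (i + 1) i.succ_pos (by simp at hi; omega), sum_const, card_range,
    nsmul_eq_mul]
  push_cast
  ring

noncomputable def perimeterTerm {Ω : Type*} (x : ℕ → Ω → ℕ) (n j : ℕ) (ω : Ω) : ℝ :=
  if j = 0 then x 0 ω else if j = n then x (n - 1) ω else |(x j ω : ℝ) - x (j - 1) ω|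

section Perimeter

variable {Ω : Type*} {x : ℕ → Ω → ℕ} {n j : ℕ}

lemma perimeterTerm_zero : perimeterTerm x n 0 = fun ω ↦ (x 0 ω : ℝ) := by
  funext ω
  simp [perimeterTerm]

lemma perimeterTerm_self (hn : n ≠ 0) : perimeterTerm x n n = fun ω ↦ (x (n - 1) ω : ℝ) := by
  funext ω
  simp [perimeterTerm, hn]

lemma perimeterTerm_of_pos_of_lt (h₀ : 0 < j) (hj : j < n) :
    perimeterTerm x n j = fun ω ↦ |(x j ω : ℝ) - x (j - 1) ω| := by
  funext ω
  simp [perimeterTerm, h₀.ne', hj.ne]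

lemma perimeter_eq_sum_perimeterTerm (hn : n ≠ 0) (ω : Ω) :
    (2 * n : ℝ) + x 0 ω + x (n - 1) ω + ∑ i ∈ Icc 1 (n - 1), |(x i ω : ℝ) - x (i - 1) ω|
      = 2 * n + ∑ j ∈ range (n + 1), perimeterTerm x n j ω := by
  obtain ⟨m, rfl⟩ : ∃ m, n = m + 1 := ⟨n - 1, by omega⟩
  rw [sum_range_succ, sum_range_succ', congrFun perimeterTerm_zero ω,
    congrFun (perimeterTerm_self hn) ω, Nat.add_sub_cancel, ← Ico_add_one_right_eq_Icc,
    sum_Ico_eq_sum_range, Nat.add_sub_cancel]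
  rw [sum_congr rfl fun i hi ↦ congrFun (perimeterTerm_of_pos_of_lt (n := m + 1) i.succ_pos
    (by simp at hi; omega)) ω]
  simp only [add_comm 1, Nat.add_sub_cancel]
  ring

/-- The columns adjacent to the `j`-th vertical edge are among `j - 1` and `min j (n - 1)`;
at `j = 0` both are `0` since `0 - 1 = 0` in `ℕ`. -/
lemma perimeterTerm_eq_comp (hj : j ≤ n) :
    ∃ φ : ℕ × ℕ → ℝ, perimeterTerm x n j = fun ω ↦ φ (x (j - 1) ω, x (min j (n - 1)) ω) := by
  unfold perimeterTerm
  by_cases h₀ : j = 0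
  · exact ⟨fun p ↦ p.2, by simp [h₀]⟩
  by_cases hn : j = n
  · subst hn
    exact ⟨fun p ↦ p.1, by simp [h₀]⟩
  · exact ⟨fun p ↦ |(p.2 : ℝ) - p.1|, by simp [h₀, hn, min_eq_left (show j ≤ n - 1 by omega)]⟩

end Perimeter

section PerimeterMoments

variable {Ω : Type*} [MeasurableSpace Ω] {μ : Measure Ω} {x : ℕ → Ω → ℕ} {n k : ℕ}

lemma memLp_perimeterTerm [IsFiniteMeasure μ] (hx : ∀ i < n, IsUniformOn (x i) (Icc 1 k) μ)
    (hn : n ≠ 0) {j : ℕ} (hj : j ≤ n) : MemLp (perimeterTerm x n j) 2 μ := by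
  obtain ⟨φ, hφ⟩ := perimeterTerm_eq_comp (x := x) hj
  have h₁ := hx (j - 1) (by omega)
  have h₂ := hx (min j (n - 1)) (by omega)
  rw [hφ]
  refine memLp_comp_of_ae_mem (h₁.measurable.prodMk h₂.measurable) (s := Icc 1 k ×ˢ Icc 1 k) ?_ φ 2
  filter_upwards [h₁.ae_mem, h₂.ae_mem] with ω hω₁ hω₂
  exact mem_product.2 ⟨hω₁, hω₂⟩

lemma covariance_perimeterTerm_eq_zero [IsFiniteMeasure μ]
    (hx : ∀ i < n, IsUniformOn (x i) (Icc 1 k) μ) (hind : iIndepFun (fun i : Fin n ↦ x i) μ)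
    {i j : ℕ} (hij : i + 2 ≤ j) (hj : j ≤ n) :
    cov[perimeterTerm x n i, perimeterTerm x n j; μ] = 0 := by
  obtain ⟨φ, hφ⟩ := perimeterTerm_eq_comp (x := x) (n := n) (j := i) (by omega)
  obtain ⟨ψ, hψ⟩ := perimeterTerm_eq_comp (x := x) hj
  have hpairs := hind.indepFun_prodMk_prodMk (fun l ↦ (hx l l.2).measurable)
    ⟨i - 1, by omega⟩ ⟨min i (n - 1), by omega⟩ ⟨j - 1, by omega⟩ ⟨min j (n - 1), by omega⟩
    (Fin.ne_of_val_ne (by dsimp; omega)) (Fin.ne_of_val_ne (by dsimp; omega))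
    (Fin.ne_of_val_ne (by dsimp; omega)) (Fin.ne_of_val_ne (by dsimp; omega))
  have hi := memLp_perimeterTerm hx (by omega) (show i ≤ n by omega)
  have hj := memLp_perimeterTerm hx (by omega) hj
  rw [hφ] at hi ⊢
  rw [hψ] at hj ⊢
  exact (hpairs.comp (φ := φ) (ψ := ψ) .of_discrete .of_discrete).covariance_eq_zero hi hj

lemma isUniformOn_pair (hx : ∀ i < n, IsUniformOn (x i) (Icc 1 k) μ)
    (hind : iIndepFun (fun i : Fin n ↦ x i) μ) {i j : ℕ} (hi : i < n) (hj : j < n) (hij : i ≠ j) :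
    IsUniformOn (fun ω ↦ (x i ω, x j ω)) (Icc 1 k ×ˢ Icc 1 k) μ :=
  (hx i hi).prodMk (hx j hj) (hind.indepFun (i := ⟨i, hi⟩) (j := ⟨j, hj⟩) (Fin.ne_of_val_ne hij))

lemma isUniformOn_triple (hx : ∀ i < n, IsUniformOn (x i) (Icc 1 k) μ)
    (hind : iIndepFun (fun i : Fin n ↦ x i) μ) {i j l : ℕ} (hi : i < n) (hj : j < n) (hl : l < n)
    (hij : i ≠ j) (hil : i ≠ l) (hjl : j ≠ l) :
    IsUniformOn (fun ω ↦ ((x i ω, x j ω), x l ω)) ((Icc 1 k ×ˢ Icc 1 k) ×ˢ Icc 1 k) μ :=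
  (isUniformOn_pair hx hind hi hj hij).prodMk (hx l hl)
    (hind.indepFun_prodMk (fun l ↦ (hx l l.2).measurable) ⟨i, hi⟩ ⟨j, hj⟩ ⟨l, hl⟩
      (Fin.ne_of_val_ne hil) (Fin.ne_of_val_ne hjl))

variable [IsProbabilityMeasure μ]

lemma sum_variance_perimeterTerm (hx : ∀ i < n, IsUniformOn (x i) (Icc 1 k) μ)
    (hind : iIndepFun (fun i : Fin n ↦ x i) μ) (hn : 2 ≤ n) :
    ∑ j ∈ range (n + 1), Var[perimeterTerm x n j; μ]
      = 2 * (((k : ℝ) ^ 2 - 1) / 12)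
        + (n - 1) * (((k : ℝ) ^ 2 - 1) * (k ^ 2 + 2) / (18 * k ^ 2)) := by
  rw [sum_range_eq_of_ends (a := ((k : ℝ) ^ 2 - 1) / 12)
    (b := ((k : ℝ) ^ 2 - 1) * (k ^ 2 + 2) / (18 * k ^ 2)) (by omega), Nat.cast_add_one]
  · ring
  · rw [perimeterTerm_zero]
    exact (hx 0 (by omega)).variance_natCast
  · rw [Nat.add_sub_cancel, perimeterTerm_self (by omega)]
    exact (hx (n - 1) (by omega)).variance_natCast
  · intro j h₀ hj
    rw [perimeterTerm_of_pos_of_lt (n := n) h₀ (by omega)]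
    exact (isUniformOn_pair hx hind (by omega) (by omega) (by omega)).variance_abs_sub

lemma sum_covariance_perimeterTerm_succ (hx : ∀ i < n, IsUniformOn (x i) (Icc 1 k) μ)
    (hind : iIndepFun (fun i : Fin n ↦ x i) μ) (hn : 2 ≤ n) :
    ∑ j ∈ range n, cov[perimeterTerm x n j, perimeterTerm x n (j + 1); μ]
      = (n - 2) * (((k : ℝ) ^ 2 - 1) * (k ^ 2 - 4) / (180 * k ^ 2)) := by
  rw [sum_range_eq_of_ends hn (a := 0) (b := ((k : ℝ) ^ 2 - 1) * (k ^ 2 - 4) / (180 * k ^ 2))]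
  · ring
  · have hsymm : (fun ω ↦ |(x 1 ω : ℝ) - x (1 - 1) ω|) = fun ω ↦ |(x 0 ω : ℝ) - x 1 ω| :=
      funext fun ω ↦ abs_sub_comm _ _
    rw [zero_add, perimeterTerm_zero, perimeterTerm_of_pos_of_lt (n := n) one_pos (by omega),
      hsymm, covariance_comm]
    exact (isUniformOn_pair hx hind (by omega) (by omega) zero_ne_one).covariance_abs_sub_eq_zero
  · rw [Nat.sub_add_cancel (by omega), perimeterTerm_self (by omega),
      perimeterTerm_of_pos_of_lt (n := n) (by omega) (by omega)]
    exact (isUniformOn_pair hx hind (by omega) (by omega) (by omega)).covariance_abs_sub_eq_zero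
  · intro j h₀ hj
    rw [perimeterTerm_of_pos_of_lt (n := n) h₀ (by omega),
      perimeterTerm_of_pos_of_lt (n := n) (by omega) (by omega), covariance_comm,
      Nat.add_sub_cancel]
    exact IsUniformOn.covariance_abs_sub_abs_sub
      (isUniformOn_pair hx hind (by omega) (by omega) (by omega))
      (isUniformOn_pair hx hind (by omega) (by omega) (by omega))
      (isUniformOn_triple hx hind (by omega) (by omega) (by omega) (by omega) (by omega) (by omega))

end PerimeterMoments

theorem variance_perimeter_uniform_general
    {Ω : Type*} [MeasurableSpace Ω] (μ : Measure Ω) [IsProbabilityMeasure μ]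
    (k : ℕ) (n : ℕ) (hn : 3 ≤ n) (x : ℕ → Ω → ℕ)
    (hmeas : ∀ i, i < n → Measurable (x i))
    (hdist : ∀ i, i < n → Measure.map (x i) μ = unifMeasure k)
    (hindep : iIndepFun (fun i : Fin n => x i) μ) :
    variance (fun ω => (2 * n : ℝ) + (x 0 ω : ℝ) + (x (n - 1) ω : ℝ)
        + ∑ i ∈ Finset.Icc 1 (n - 1), |(x i ω : ℝ) - (x (i - 1) ω : ℝ)|) μ
      = ((4 * (k : ℝ) ^ 4 - 5 * (k : ℝ) ^ 2 + 1)
          + 3 * ((k : ℝ) ^ 4 - 1) * (n : ℝ)) / (45 * (k : ℝ) ^ 2) := by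
  have hx : ∀ i < n, IsUniformOn (x i) (Icc 1 k) μ := fun i hi ↦
    isUniformOn_of_map_eq_unifMeasure (hmeas i hi) (hdist i hi)
  have hk : (k : ℝ) ≠ 0 := by simpa [Nat.one_le_iff_ne_zero] using (hx 0 (by omega)).nonempty
  have hT : ∀ j ≤ n, MemLp (perimeterTerm x n j) 2 μ := fun j ↦ memLp_perimeterTerm hx (by omega)
  rw [funext (perimeter_eq_sum_perimeterTerm (x := x) (by omega)),
    variance_const_add (memLp_finsetSum _ fun j hj ↦ hT j (by grind)).aestronglyMeasurable,
    variance_sum_range_succ_of_covariance_eq_zero hT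
      (fun i j hij hj ↦ covariance_perimeterTerm_eq_zero hx hindep hij hj),
    sum_variance_perimeterTerm hx hindep (by omega),
    sum_covariance_perimeterTerm_succ hx hindep (by omega)]
  field_simp
  ring

theorem variance_perimeter_uniform
    {Ω : Type*} [MeasurableSpace Ω] (μ : Measure Ω) [IsProbabilityMeasure μ]
    (k : ℕ) (hk : 2 ≤ k) (n : ℕ) (hn : 3 ≤ n) (x : ℕ → Ω → ℕ)
    (hmeas : ∀ i, i < n → Measurable (x i))
    (hdist : ∀ i, i < n → Measure.map (x i) μ = unifMeasure k)
    (hindep : iIndepFun (fun i : Fin n => x i) μ) :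
    variance (fun ω => (2 * n : ℝ) + (x 0 ω : ℝ) + (x (n - 1) ω : ℝ)
        + ∑ i ∈ Finset.Icc 1 (n - 1), |(x i ω : ℝ) - (x (i - 1) ω : ℝ)|) μ
      = ((4 * (k : ℝ) ^ 4 - 5 * (k : ℝ) ^ 2 + 1)
          + 3 * ((k : ℝ) ^ 4 - 1) * (n : ℝ)) / (45 * (k : ℝ) ^ 2) :=
  variance_perimeter_uniform_general μ k n hn x hmeas hdist hindep
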